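/- For m = 1 (scalar blocks), the transfer matrix T = [[-a_n/b_n, -c_{n-1}/b_n],[1,0]] ⋯ [[-a_1/b_1, -c_0/b_1],[1,0]] satisfies det(T - I_2) = -((-1)^n/(b_1 ⋯ b_n)) · [ (z_1 + z_2) - (-1)^n (b_1 ⋯ b_n + c_0 ⋯ c_{n-1}) ], where z_1 + z_2 = tr( [[a_n, -b_{n-1}c_{n-1}],[1,0]] ⋯ [[a_2, -b_1c_1],[1,0]] · [[a_1, -b_n c_0],[1,0]] ). -/

import Mathlib

open Matrix

/-- The scalar (`m = 1`) transfer matrix: partial products of the factors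
`[[-a_k/b_k, -c_{k-1}/b_k], [1, 0]]`, index decreasing from left to right. -/
noncomputable def scalarTransfer (a b c : ℕ → ℂ) : ℕ → Matrix (Fin 2) (Fin 2) ℂ
  | 0 => 1
  | k + 1 => !![-a (k + 1) / b (k + 1), -c k / b (k + 1); 1, 0] * scalarTransfer a b c k

/-- The partial products of the `2 × 2` matrices for the corner case: rightmost factor
`[[a_1, -b_n c_0], [1, 0]]`, then `[[a_k, -b_{k-1} c_{k-1}], [1, 0]]` for `k = 2, …`
with index decreasing from left to right. -/
noncomputable def cornerProd (n : ℕ) (a b c : ℕ → ℂ) : ℕ → Matrix (Fin 2) (Fin 2) ℂ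
  | 0 => 1
  | 1 => !![a 1, -(b n * c 0); 1, 0]
  | k + 2 => !![a (k + 2), -(b (k + 1) * c (k + 1)); 1, 0] * cornerProd n a b c (k + 1)

/-!
Clearing denominators, `(-1)^n b_1 ⋯ b_n • T` is the product of the factors
`Q_k = [[a_k, c_{k-1}], [-b_k, 0]]`. With `D_k = diag(1, -b_k)` one has
`Q_k D_{k-1} = D_k [[a_k, -b_{k-1} c_{k-1}], [1, 0]]`, so reading `D_0` as `D_n` the product
`Q_n ⋯ Q_1` is conjugate by `D_n` to the corner product and has the same trace. Together with
`det T = c_0 ⋯ c_{n-1} / (b_1 ⋯ b_n)` and `det (T - 1) = det T - tr T + 1` this gives the formula.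
-/

lemma Matrix.det_sub_one_fin_two {R : Type*} [CommRing R] (A : Matrix (Fin 2) (Fin 2) R) :
    (A - 1).det = A.det - A.trace + 1 := by
  simp only [det_fin_two, trace_fin_two, sub_apply, one_apply_eq, one_apply_ne zero_ne_one,
    one_apply_ne one_ne_zero]
  ring

lemma Matrix.trace_eq_of_mul_eq_mul {n R : Type*} [Fintype n] [DecidableEq n] [CommRing R]
    {A P D : Matrix n n R} (hD : IsUnit D) (h : A * D = D * P) : A.trace = P.trace := by
  rw [← trace_conj hD P, ← h, mul_nonsing_inv_cancel_right _ _ ((isUnit_iff_isUnit_det D).1 hD)]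

lemma det_scalarTransfer (a b c : ℕ → ℂ) (k : ℕ) :
    (scalarTransfer a b c k).det = (∏ i ∈ Finset.range k, c i) / ∏ i ∈ Finset.Icc 1 k, b i := by
  induction k with
  | zero => simp [scalarTransfer]
  | succ k ih =>
    rw [scalarTransfer, det_mul, ih, det_fin_two_of, Finset.prod_range_succ,
      Finset.prod_Icc_succ_top (Nat.le_add_left 1 k)]
    field_simp
    ring

noncomputable def scaledTransfer (a b c : ℕ → ℂ) : ℕ → Matrix (Fin 2) (Fin 2) ℂ
  | 0 => 1
  | k + 1 => !![a (k + 1), c k; -b (k + 1), 0] * scaledTransfer a b c k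

lemma scaledTransfer_eq_smul (a b c : ℕ → ℂ) (k : ℕ) (hb : ∀ i, 1 ≤ i → i ≤ k → b i ≠ 0) :
    scaledTransfer a b c k = ((-1 : ℂ) ^ k * ∏ i ∈ Finset.Icc 1 k, b i) • scalarTransfer a b c k := by
  induction k with
  | zero => simp [scaledTransfer, scalarTransfer]
  | succ k ih =>
    have hbk : b (k + 1) ≠ 0 := hb _ (Nat.le_add_left 1 k) le_rfl
    have hfactor : !![a (k + 1), c k; -b (k + 1), 0] =
        (-b (k + 1)) • !![-a (k + 1) / b (k + 1), -c k / b (k + 1); 1, 0] := by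
      ext i j
      fin_cases i <;> fin_cases j <;> simp [mul_div_cancel₀ _ hbk]
    rw [scaledTransfer, ih fun i h1 h2 => hb i h1 (h2.trans k.le_succ), hfactor, scalarTransfer,
      Matrix.smul_mul, Matrix.mul_smul, smul_smul, Finset.prod_Icc_succ_top (Nat.le_add_left 1 k)]
    congr 1
    ring

lemma factor_mul_diagonal {R : Type*} [CommRing R] (α β γ δ : R) :
    !![α, γ; -β, 0] * !![1, 0; 0, -δ] = !![1, 0; 0, -β] * !![α, -(δ * γ); 1, 0] := by
  rw [mul_fin_two, mul_fin_two]
  simp [mul_comm]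

lemma scaledTransfer_mul_diagonal (n : ℕ) (a b c : ℕ → ℂ) (k : ℕ) :
    scaledTransfer a b c (k + 1) * !![1, 0; 0, -b n] =
      !![1, 0; 0, -b (k + 1)] * cornerProd n a b c (k + 1) := by
  induction k with
  | zero => simp only [scaledTransfer, mul_one, cornerProd, factor_mul_diagonal]
  | succ k ih =>
    rw [scaledTransfer, mul_assoc, ih, ← mul_assoc, factor_mul_diagonal, mul_assoc, cornerProd]

lemma trace_scaledTransfer (a b c : ℕ → ℂ) (k : ℕ) (hbk : b (k + 1) ≠ 0) :
    (scaledTransfer a b c (k + 1)).trace = (cornerProd (k + 1) a b c (k + 1)).trace :=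
  trace_eq_of_mul_eq_mul (by simp [isUnit_iff_isUnit_det, hbk])
    (scaledTransfer_mul_diagonal (k + 1) a b c k)

lemma trace_scalarTransfer (a b c : ℕ → ℂ) (n : ℕ) (hb : ∀ i, 1 ≤ i → i ≤ n → b i ≠ 0) :
    ((-1 : ℂ) ^ n * ∏ i ∈ Finset.Icc 1 n, b i) * (scalarTransfer a b c n).trace =
      (cornerProd n a b c n).trace := by
  cases n with
  | zero => simp [scalarTransfer, cornerProd]
  | succ m =>
    rw [← smul_eq_mul, ← trace_smul, ← scaledTransfer_eq_smul a b c (m + 1) hb]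
    exact trace_scaledTransfer a b c m (hb _ (Nat.le_add_left 1 m) le_rfl)

theorem det_scalarTransfer_sub_one_general (n : ℕ) (a b c : ℕ → ℂ)
    (hb : ∀ i, 1 ≤ i → i ≤ n → b i ≠ 0) :
    (scalarTransfer a b c n - (1 : Matrix (Fin 2) (Fin 2) ℂ)).det =
      -((-1 : ℂ) ^ n / ∏ i ∈ Finset.Icc 1 n, b i) *
        ((cornerProd n a b c n).trace -
          (-1 : ℂ) ^ n * ((∏ i ∈ Finset.Icc 1 n, b i) + ∏ i ∈ Finset.range n, c i)) := by
  have hB : ∏ i ∈ Finset.Icc 1 n, b i ≠ 0 :=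
    Finset.prod_ne_zero_iff.2 fun i hi => hb i (Finset.mem_Icc.1 hi).1 (Finset.mem_Icc.1 hi).2
  have hsign : (-1 : ℂ) ^ n * (-1) ^ n = 1 := by rw [← mul_pow]; norm_num
  rw [det_sub_one_fin_two, det_scalarTransfer, ← trace_scalarTransfer a b c n hb]
  field_simp
  linear_combination (-(∏ i ∈ Finset.Icc 1 n, b i) - ∏ i ∈ Finset.range n, c i +
    (∏ i ∈ Finset.Icc 1 n, b i) * (scalarTransfer a b c n).trace) * hsign

/-- For `m = 1`:
`det (T - I_2) = -((-1)^n/(b_1 ⋯ b_n)) · [(z_1 + z_2) - (-1)^n (b_1 ⋯ b_n + c_0 ⋯ c_{n-1})]`,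
where `z_1 + z_2` is the trace of the product
`[[a_n, -b_{n-1} c_{n-1}], [1, 0]] ⋯ [[a_2, -b_1 c_1], [1, 0]] · [[a_1, -b_n c_0], [1, 0]]`. -/
theorem det_scalarTransfer_sub_one (n : ℕ) (hn : 2 ≤ n) (a b c : ℕ → ℂ)
    (hb : ∀ i, 1 ≤ i → i ≤ n → b i ≠ 0)
    (hc : ∀ i, i < n → c i ≠ 0) :
    (scalarTransfer a b c n - (1 : Matrix (Fin 2) (Fin 2) ℂ)).det =
      -((-1 : ℂ) ^ n / ∏ i ∈ Finset.Icc 1 n, b i) *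
        ((cornerProd n a b c n).trace -
          (-1 : ℂ) ^ n * ((∏ i ∈ Finset.Icc 1 n, b i) + ∏ i ∈ Finset.range n, c i)) :=
  det_scalarTransfer_sub_one_general n a b c hb
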